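/- Consider the two-timepoint model: A₁ ~ Bernoulli(p); I₂ | A₁ ~ Bernoulli(ρ₀ − ρ₁ A₁); A₂ = 0 if I₂ = 0 and A₂ | (I₂ = 1) ~ Bernoulli(p) independent of A₁ given I₂; outcome Y = β₀ + β₁ A₁ + β₂ A₂ − α A₁ A₂ + ε with ε mean-zero and independent of (A₁, I₂, A₂). Then E[Y | A₁ = 1] − E[Y | A₁ = 0] = β₁ − p ρ₀ α + p ρ₁ α − p ρ₁ β₂. -/

import Mathlib

/-!
On the arm `A₁ = a` the outcome is `Y = β₀ + β₁a + (β₂ − αa)·1{A₂ = 1} + ε`. The noise integrates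
to zero over the arm because it is centred and independent of `A₁`, and since `A₂ = 1` forces
eligibility `I₂ = 1`, `P(A₁ = a, A₂ = 1) = p(ρ₀ − ρ₁a)·P(A₁ = a)`. Hence
`E[Y | A₁ = a] = β₀ + β₁a + (β₂ − αa)·p(ρ₀ − ρ₁a)`, and subtracting the two arms gives the claim.
-/

open MeasureTheory ProbabilityTheory

lemma natCast_eq_indicator_one {ι : Type*} {f : ι → ℕ} {i : ι} (hf : f i = 0 ∨ f i = 1) :
    (f i : ℝ) = {j | f j = 1}.indicator 1 i := by
  rcases hf with h | h <;> simp [h]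

section

variable {Ω : Type*} [MeasurableSpace Ω] {μ : Measure Ω}

lemma setIntegral_preimage_eq_zero_of_indepFun {β : Type*} [MeasurableSpace β]
    {ε : Ω → ℝ} {X : Ω → β} (hindep : IndepFun ε X μ) (hε : AEStronglyMeasurable ε μ)
    (hmean : ∫ ω, ε ω ∂μ = 0) (hX : Measurable X) {S : Set β} (hS : MeasurableSet S) :
    ∫ ω in X ⁻¹' S, ε ω ∂μ = 0 := by
  have hS_ind : Measurable (S.indicator (1 : β → ℝ)) := measurable_one.indicator hS
  have hprod : (X ⁻¹' S).indicator ε = ε * (S.indicator 1 ∘ X) := by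
    ext ω
    by_cases h : X ω ∈ S <;> simp [h]
  have hindep_S : IndepFun ε (S.indicator 1 ∘ X) μ := hindep.comp measurable_id hS_ind
  rw [← integral_indicator (hX hS), hprod, hindep_S.integral_mul_eq_mul_integral hε
      (hS_ind.comp hX).aestronglyMeasurable, hmean, zero_mul]

lemma setIntegral_affine_indicator_add [IsFiniteMeasure μ] {s t : Set Ω} (ht : MeasurableSet t)
    {ε : Ω → ℝ} (hε : Integrable ε μ) (hε_s : ∫ ω in s, ε ω ∂μ = 0) (c d : ℝ) :
    ∫ ω in s, (c + d * t.indicator 1 ω + ε ω) ∂μ = c * μ.real s + d * μ.real (s ∩ t) := by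
  have ht_int : Integrable (fun ω => d * t.indicator (1 : Ω → ℝ) ω) (μ.restrict s) :=
    ((integrable_const 1).indicator ht).const_mul d
  have hcd_int : Integrable (fun ω => c + d * t.indicator (1 : Ω → ℝ) ω) (μ.restrict s) :=
    (integrable_const c).add ht_int
  rw [integral_add hcd_int hε.restrict, hε_s, integral_add (integrable_const c) ht_int,
    integral_const_mul, setIntegral_indicator ht, setIntegral_const]
  simp [mul_comm]

lemma integral_ite_eq_of_affine_on_arm [IsFiniteMeasure μ] {α : Type*} [MeasurableSpace α]
    [MeasurableSingletonClass α] [DecidableEq α] {A1 : Ω → α} {A2 : Ω → ℕ} {ε Y : Ω → ℝ}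
    (hA1 : Measurable A1) (hA2 : Measurable A2) (hA2_01 : ∀ ω, A2 ω = 0 ∨ A2 ω = 1)
    (hε : Integrable ε μ) (hmean : ∫ ω, ε ω ∂μ = 0) (hindep : IndepFun ε A1 μ) {a : α} {c d : ℝ}
    (hY : ∀ ω, A1 ω = a → Y ω = c + d * A2 ω + ε ω) :
    ∫ ω, (if A1 ω = a then Y ω else 0) ∂μ
      = c * μ.real {ω | A1 ω = a} + d * μ.real ({ω | A1 ω = a} ∩ {ω | A2 ω = 1}) := by
  have hs : MeasurableSet {ω | A1 ω = a} := hA1 (measurableSet_singleton a)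
  have hY_arm : ∀ ω ∈ {ω | A1 ω = a},
      Y ω = c + d * {ω | A2 ω = 1}.indicator 1 ω + ε ω := fun ω hω => by
    rw [hY ω hω, natCast_eq_indicator_one (hA2_01 ω)]
  calc ∫ ω, (if A1 ω = a then Y ω else 0) ∂μ
      = ∫ ω in {ω | A1 ω = a}, Y ω ∂μ := by
        rw [← integral_indicator hs]
        simp only [Set.indicator_apply, Set.mem_ofPred_eq]
    _ = ∫ ω in {ω | A1 ω = a}, (c + d * {ω | A2 ω = 1}.indicator 1 ω + ε ω) ∂μ :=
        setIntegral_congr_fun hs hY_arm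
    _ = _ :=
        setIntegral_affine_indicator_add (hA2 (measurableSet_singleton 1)) hε
          (setIntegral_preimage_eq_zero_of_indepFun hindep hε.aestronglyMeasurable hmean hA1
            (measurableSet_singleton a)) c d

lemma measureReal_inter_eq_of_eligibility {α : Type*} {A1 : Ω → α} {I2 A2 : Ω → ℕ} {a : α}
    {p r : ℝ} (hp : 0 ≤ p) (hr : 0 ≤ r) (hI2_01 : ∀ ω, I2 ω = 0 ∨ I2 ω = 1)
    (helig : ∀ ω, I2 ω = 0 → A2 ω = 0)
    (hI2 : μ {ω | I2 ω = 1 ∧ A1 ω = a} = ENNReal.ofReal r * μ {ω | A1 ω = a})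
    (hA2 : μ {ω | A2 ω = 1 ∧ I2 ω = 1 ∧ A1 ω = a}
      = ENNReal.ofReal p * μ {ω | I2 ω = 1 ∧ A1 ω = a}) :
    μ.real ({ω | A1 ω = a} ∩ {ω | A2 ω = 1}) = p * r * μ.real {ω | A1 ω = a} := by
  have htreated_eligible : {ω | A1 ω = a} ∩ {ω | A2 ω = 1}
      = {ω | A2 ω = 1 ∧ I2 ω = 1 ∧ A1 ω = a} := by
    ext ω
    have := helig ω
    rcases hI2_01 ω with h | h <;> simp_all [and_comm]
  simp only [measureReal_def, htreated_eligible, hA2, hI2, ENNReal.toReal_mul,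
    ENNReal.toReal_ofReal hp, ENNReal.toReal_ofReal hr, mul_assoc]

end

theorem stmt_10_general {Ω : Type*} [MeasurableSpace Ω] (μ : Measure Ω) [IsProbabilityMeasure μ]
    (A1 I2 A2 : Ω → ℕ) (ε Y : Ω → ℝ)
    (hA1m : Measurable A1) (hA2m : Measurable A2)
    (hA101 : ∀ ω, A1 ω = 0 ∨ A1 ω = 1) (hI201 : ∀ ω, I2 ω = 0 ∨ I2 ω = 1)
    (hA201 : ∀ ω, A2 ω = 0 ∨ A2 ω = 1)
    (p ρ₀ ρ₁ β₀ β₁ β₂ α : ℝ) (hp0 : 0 < p) (hp1 : p < 1)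
    (hρ : 0 ≤ ρ₀ - ρ₁ ∧ ρ₀ - ρ₁ ≤ ρ₀ ∧ ρ₀ ≤ 1)
    (hA1Bern : μ {ω | A1 ω = 1} = ENNReal.ofReal p)
    (hI2cond : ∀ a, a = 0 ∨ a = 1 →
      μ {ω | I2 ω = 1 ∧ A1 ω = a} = ENNReal.ofReal (ρ₀ - ρ₁ * a) * μ {ω | A1 ω = a})
    (hA2cond : ∀ a, a = 0 ∨ a = 1 →
      μ {ω | A2 ω = 1 ∧ I2 ω = 1 ∧ A1 ω = a}
        = ENNReal.ofReal p * μ {ω | I2 ω = 1 ∧ A1 ω = a})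
    (hA2elig : ∀ ω, I2 ω = 0 → A2 ω = 0)
    (hεint : Integrable ε μ) (hεmean : ∫ ω, ε ω ∂μ = 0)
    (hεindep : IndepFun ε (fun ω => (A1 ω, I2 ω, A2 ω)) μ)
    (hY : ∀ ω, Y ω = β₀ + β₁ * A1 ω + β₂ * A2 ω - α * A1 ω * A2 ω + ε ω) :
    (∫ ω, (if A1 ω = 1 then Y ω else 0) ∂μ) / (μ {ω | A1 ω = 1}).toReal
      - (∫ ω, (if A1 ω = 0 then Y ω else 0) ∂μ) / (μ {ω | A1 ω = 0}).toReal
    = β₁ - p * ρ₀ * α + p * ρ₁ * α - p * ρ₁ * β₂ := by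
  have hA1_indep : IndepFun ε A1 μ := hεindep.comp measurable_id measurable_fst
  have harm : ∀ a : ℕ, a = 0 ∨ a = 1 →
      ∫ ω, (if A1 ω = a then Y ω else 0) ∂μ
        = (β₀ + β₁ * a + (β₂ - α * a) * (p * (ρ₀ - ρ₁ * a))) * μ.real {ω | A1 ω = a} := by
    intro a ha
    have hρa : 0 ≤ ρ₀ - ρ₁ * a := by
      rcases ha with rfl | rfl <;> simp <;> linarith [hρ.1, hρ.2.1]
    rw [integral_ite_eq_of_affine_on_arm hA1m hA2m hA201 hεint hεmean hA1_indep
        (c := β₀ + β₁ * a) (d := β₂ - α * a) (fun ω hω => by rw [hY, hω]; ring),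
      measureReal_inter_eq_of_eligibility hp0.le hρa hI201 hA2elig (hI2cond a ha) (hA2cond a ha)]
    ring
  have htreated : μ.real {ω | A1 ω = 1} = p := by
    rw [measureReal_def, hA1Bern, ENNReal.toReal_ofReal hp0.le]
  have hcontrol : μ.real {ω | A1 ω = 0} = 1 - p := by
    have hcompl : {ω | A1 ω = 0} = {ω | A1 ω = 1}ᶜ := by
      ext ω
      rcases hA101 ω with h | h <;> simp [h]
    rw [hcompl, probReal_compl_eq_one_sub (measurableSet_eq_fun hA1m measurable_const), htreated]
  simp only [← measureReal_def]
  rw [harm 1 (Or.inr rfl), harm 0 (Or.inl rfl), htreated, hcontrol,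
    mul_div_cancel_right₀ _ hp0.ne', mul_div_cancel_right₀ _ (sub_ne_zero.mpr hp1.ne')]
  push_cast
  ring

/-- in the two-timepoint model with treatment-dependent eligibility and
Y = β₀ + β₁A₁ + β₂A₂ − αA₁A₂ + ε, we have
E[Y | A₁ = 1] − E[Y | A₁ = 0] = β₁ − pρ₀α + pρ₁α − pρ₁β₂. -/
theorem stmt_10 {Ω : Type*} [MeasurableSpace Ω] (μ : Measure Ω) [IsProbabilityMeasure μ]
    (A1 I2 A2 : Ω → ℕ) (ε Y : Ω → ℝ)
    (hA1m : Measurable A1) (hI2m : Measurable I2) (hA2m : Measurable A2)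
    (hεm : Measurable ε)
    (hA101 : ∀ ω, A1 ω = 0 ∨ A1 ω = 1) (hI201 : ∀ ω, I2 ω = 0 ∨ I2 ω = 1)
    (hA201 : ∀ ω, A2 ω = 0 ∨ A2 ω = 1)
    (p ρ₀ ρ₁ β₀ β₁ β₂ α : ℝ) (hp0 : 0 < p) (hp1 : p < 1)
    (hρ : 0 ≤ ρ₀ - ρ₁ ∧ ρ₀ - ρ₁ ≤ ρ₀ ∧ ρ₀ ≤ 1)
    (hA1Bern : μ {ω | A1 ω = 1} = ENNReal.ofReal p)
    (hI2cond : ∀ a, a = 0 ∨ a = 1 →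
      μ {ω | I2 ω = 1 ∧ A1 ω = a} = ENNReal.ofReal (ρ₀ - ρ₁ * a) * μ {ω | A1 ω = a})
    (hA2cond : ∀ a, a = 0 ∨ a = 1 →
      μ {ω | A2 ω = 1 ∧ I2 ω = 1 ∧ A1 ω = a}
        = ENNReal.ofReal p * μ {ω | I2 ω = 1 ∧ A1 ω = a})
    (hA2elig : ∀ ω, I2 ω = 0 → A2 ω = 0)
    (hεint : Integrable ε μ) (hεmean : ∫ ω, ε ω ∂μ = 0)
    (hεindep : IndepFun ε (fun ω => (A1 ω, I2 ω, A2 ω)) μ)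
    (hY : ∀ ω, Y ω = β₀ + β₁ * A1 ω + β₂ * A2 ω - α * A1 ω * A2 ω + ε ω) :
    (∫ ω, (if A1 ω = 1 then Y ω else 0) ∂μ) / (μ {ω | A1 ω = 1}).toReal
      - (∫ ω, (if A1 ω = 0 then Y ω else 0) ∂μ) / (μ {ω | A1 ω = 0}).toReal
    = β₁ - p * ρ₀ * α + p * ρ₁ * α - p * ρ₁ * β₂ :=
  stmt_10_general μ A1 I2 A2 ε Y hA1m hA2m hA101 hI201 hA201 p ρ₀ ρ₁ β₀ β₁ β₂ α hp0 hp1 hρ hA1Bern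
    hI2cond hA2cond hA2elig hεint hεmean hεindep hY
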